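/- arXiv:1906.04705 — 4 statements merged into one kernel-verified Lean document; each statement's English description precedes it below -/
import Mathlib

section
/- Let (P, u) be a weighted set of points in ℝ^d with Σ_{p∈P} u(p) = 1 and u(p) > 0 for all p ∈ P, and let {P_1, …, P_k} be a partition of P into k disjoint nonempty clusters, each of size at most s. For every i ∈ [k] let μ_i = (1 / Σ_{q∈P_i} u(q)) · Σ_{p∈P_i} u(p)·p and u'(μ_i) = Σ_{p∈P_i} u(p). Suppose (μ̃, w̃) is a Caratheodory set for ({μ_1, …, μ_k}, u'): μ̃ ⊆ {μ_1, …, μ_k}, |μ̃| ≤ d + 1, Σ_{μ_i∈μ̃} w̃(μ_i) = 1, and Σ_{μ_i∈μ̃} w̃(μ_i)·μ_i = Σ_{i=1}^k u'(μ_i)·μ_i. Define C = ∪_{μ_i∈μ̃} P_i and, for every μ_i ∈ μ̃ and p ∈ P_i, w(p) = w̃(μ_i)·u(p) / Σ_{q∈P_i} u(q). Then C ⊆ P, |C| ≤ (d + 1)·s, Σ_{p∈C} w(p) = 1, and Σ_{p∈C} w(p)·p = Σ_{p∈P} u(p)·p. -/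
/-! Since the clusters are disjoint, sums over `C` split into sums over the chosen clusters. On
cluster `i` the weights `w` are the weights `u` rescaled by `w̃ i / u' i`, so they add up to `w̃ i`
and their weighted sum is `w̃ i • μ i`. Hence the total weight and the weighted sum of `C` are those
of the Caratheodory set `(μ̃, w̃)`, i.e. `1` and `∑ i, u' i • μ i`; and `u' i • μ i` is the weighted
sum of cluster `i`, so the latter is the weighted sum of `P`. -/

open Finset

namespace Finset

theorem sum_mul_div_sum_self {R ι : Type*} [Field R] {s : Finset ι} {u : ι → R}
    (hu : ∑ i ∈ s, u i ≠ 0) (c : R) : ∑ i ∈ s, c * u i / ∑ j ∈ s, u j = c := by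
  rw [← sum_div, ← mul_sum, mul_div_assoc, div_self hu, mul_one]

variable {R E : Type*} [Field R] [AddCommGroup E] [Module R E] {s : Finset E} {u : E → R}

theorem sum_smul_centerMass_id (hu : ∑ p ∈ s, u p ≠ 0) :
    (∑ p ∈ s, u p) • s.centerMass u id = ∑ p ∈ s, u p • p := by
  rw [centerMass, smul_smul, mul_inv_cancel₀ hu, one_smul]
  rfl

theorem sum_mul_div_sum_smul_self (c : R) :
    ∑ p ∈ s, (c * u p / ∑ q ∈ s, u q) • p = c • s.centerMass u id := by
  simp only [centerMass, id, smul_smul, smul_sum, div_eq_mul_inv]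
  exact sum_congr rfl fun p _ => by ring_nf

end Finset

theorem fast_caratheodory_merge_step_general (d k s : ℕ) (P : Finset (Fin d → ℝ))
    (u : (Fin d → ℝ) → ℝ) (hupos : ∀ p ∈ P, 0 < u p)
    (Pc : Fin k → Finset (Fin d → ℝ))
    (hdisj : ∀ i j, i ≠ j → Disjoint (Pc i) (Pc j))
    (hunion : P = Finset.univ.biUnion Pc)
    (hne : ∀ i, (Pc i).Nonempty)
    (hsize : ∀ i, (Pc i).card ≤ s)
    (μ : Fin k → (Fin d → ℝ))
    (hμ : ∀ i, μ i = (∑ q ∈ Pc i, u q)⁻¹ • ∑ p ∈ Pc i, u p • p)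
    (u' : Fin k → ℝ) (hu' : ∀ i, u' i = ∑ q ∈ Pc i, u q)
    (T : Finset (Fin k)) (w' : Fin k → ℝ)
    (hTcard : T.card ≤ d + 1)
    (hw'sum : ∑ i ∈ T, w' i = 1)
    (hw'mean : ∑ i ∈ T, w' i • μ i = ∑ i, u' i • μ i)
    (C : Finset (Fin d → ℝ)) (hC : C = T.biUnion Pc)
    (w : (Fin d → ℝ) → ℝ)
    (hw : ∀ i ∈ T, ∀ p ∈ Pc i, w p = w' i * u p / ∑ q ∈ Pc i, u q) :
    C ⊆ P ∧ C.card ≤ (d + 1) * s ∧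
    ∑ p ∈ C, w p = 1 ∧ ∑ p ∈ C, w p • p = ∑ p ∈ P, u p • p := by
  have hPc : ∀ t : Finset (Fin k), (t : Set (Fin k)).PairwiseDisjoint Pc :=
    fun _ i _ j _ hij => hdisj i j hij
  have hclusterSum (i : Fin k) : ∑ q ∈ Pc i, u q ≠ 0 :=
    (sum_pos (fun q hq => hupos q (hunion ▸ mem_biUnion.2 ⟨i, mem_univ i, hq⟩)) (hne i)).ne'
  subst hC
  refine ⟨hunion ▸ biUnion_subset_biUnion_of_subset_left Pc (subset_univ T),
    (card_biUnion_le_card_mul T Pc s fun i _ => hsize i).trans (Nat.mul_le_mul_right s hTcard),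
    ?_, ?_⟩
  · rw [sum_biUnion (hPc T), ← hw'sum]
    exact sum_congr rfl fun i hi =>
      (sum_congr rfl (hw i hi)).trans (sum_mul_div_sum_self (hclusterSum i) (w' i))
  · rw [sum_biUnion (hPc T), hunion, sum_biUnion (hPc univ)]
    calc ∑ i ∈ T, ∑ p ∈ Pc i, w p • p = ∑ i ∈ T, w' i • μ i :=
          sum_congr rfl fun i hi => by
            rw [sum_congr rfl fun p hp => by rw [hw i hi p hp], sum_mul_div_sum_smul_self, hμ]
            rfl
      _ = ∑ i, u' i • μ i := hw'mean
      _ = ∑ i, ∑ p ∈ Pc i, u p • p := sum_congr rfl fun i _ => by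
          rw [hu', hμ]
          exact sum_smul_centerMass_id (hclusterSum i)

/-- Merge step of the Fast-Caratheodory-Set algorithm: a Caratheodory set
`(μ̃, w̃)` of the `k` cluster means (encoded by a set `T` of at most `d + 1`
cluster indices) lifts to a weighted subset `C ⊆ P` of at most `(d + 1) * s`
original points with total weight `1` and the same weighted mean as `(P, u)`. -/
theorem fast_caratheodory_merge_step (d k s : ℕ) (P : Finset (Fin d → ℝ))
    (u : (Fin d → ℝ) → ℝ) (hupos : ∀ p ∈ P, 0 < u p)
    (husum : ∑ p ∈ P, u p = 1)
    (Pc : Fin k → Finset (Fin d → ℝ))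
    (hdisj : ∀ i j, i ≠ j → Disjoint (Pc i) (Pc j))
    (hunion : P = Finset.univ.biUnion Pc)
    (hne : ∀ i, (Pc i).Nonempty)
    (hsize : ∀ i, (Pc i).card ≤ s)
    (μ : Fin k → (Fin d → ℝ))
    (hμ : ∀ i, μ i = (∑ q ∈ Pc i, u q)⁻¹ • ∑ p ∈ Pc i, u p • p)
    (u' : Fin k → ℝ) (hu' : ∀ i, u' i = ∑ q ∈ Pc i, u q)
    (T : Finset (Fin k)) (w' : Fin k → ℝ)
    (hTcard : T.card ≤ d + 1)
    (hw'nonneg : ∀ i ∈ T, 0 ≤ w' i)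
    (hw'sum : ∑ i ∈ T, w' i = 1)
    (hw'mean : ∑ i ∈ T, w' i • μ i = ∑ i, u' i • μ i)
    (C : Finset (Fin d → ℝ)) (hC : C = T.biUnion Pc)
    (w : (Fin d → ℝ) → ℝ)
    (hw : ∀ i ∈ T, ∀ p ∈ Pc i, w p = w' i * u p / ∑ q ∈ Pc i, u q) :
    C ⊆ P ∧ C.card ≤ (d + 1) * s ∧
    ∑ p ∈ C, w p = 1 ∧ ∑ p ∈ C, w p • p = ∑ p ∈ P, u p • p :=
  fast_caratheodory_merge_step_general d k s P u hupos Pc hdisj hunion hne hsize μ hμ u' hu' T w'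
    hTcard hw'sum hw'mean C hC w hw
end

section
/- Let A ∈ ℝ^{n×d} be a matrix with rows a_1ᵀ, …, a_nᵀ, where n ≥ d² + 1. Then there exists a weight function w : [n] → [0, ∞) whose support has size at most d² + 1, with Σ_{i=1}^n w(i) = 1, such that n · Σ_{i=1}^n w(i)·a_i a_iᵀ = AᵀA. Consequently, the matrix S ∈ ℝ^{(d²+1)×d} whose rows are the vectors √(n·w(i))·a_iᵀ over the (at most d² + 1) indices i in the support of w satisfies SᵀS = AᵀA; that is, S is a matrix of at most d² + 1 scaled rows of A with the same covariance matrix as A. -/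
open Matrix

lemma transpose_mul_self_eq_sum_vecMulVec {n d : ℕ} (A : Matrix (Fin n) (Fin d) ℝ) :
    Aᵀ * A = ∑ i, vecMulVec (A i) (A i) := by
  ext j k
  simp [Matrix.mul_apply, vecMulVec_apply, Matrix.sum_apply, mul_comm]

/-- **Caratheodory-Matrix existence.** For a matrix `A ∈ ℝ^{n×d}` with
`n ≥ d² + 1`, there are nonnegative weights `w` supported on at most `d² + 1`
indices, summing to `1`, with `n • ∑ i, w i • a_i a_iᵀ = AᵀA`; consequently
the matrix whose `i`-th row is `√(n · w i) · a_iᵀ` (nonzero only on the at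
most `d² + 1` rows in the support of `w`, i.e. a matrix of at most `d² + 1`
scaled rows of `A`) has the same covariance matrix as `A`. -/
theorem caratheodory_matrix_exists (n d : ℕ) (hn : n ≥ d ^ 2 + 1)
    (A : Matrix (Fin n) (Fin d) ℝ) :
    ∃ w : Fin n → ℝ, (∀ i, 0 ≤ w i) ∧
      (Finset.univ.filter fun i => w i ≠ 0).card ≤ d ^ 2 + 1 ∧
      ∑ i, w i = 1 ∧
      (n : ℝ) • ∑ i, w i • vecMulVec (A i) (A i) = Aᵀ * A ∧
      (Matrix.of fun i j => Real.sqrt ((n : ℝ) * w i) * A i j)ᵀ *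
        (Matrix.of fun i j => Real.sqrt ((n : ℝ) * w i) * A i j) = Aᵀ * A := by
  have hn0 : 0 < n := lt_of_lt_of_le (Nat.succ_pos _) hn
  have hnR : (0:ℝ) < n := by exact_mod_cast hn0
  set f : Fin n → Matrix (Fin d) (Fin d) ℝ := fun i => vecMulVec (A i) (A i) with hf
  set x : Matrix (Fin d) (Fin d) ℝ := ∑ i, ((n:ℝ)⁻¹) • f i with hx
  -- x is in the convex hull of the range of f
  have hmem : x ∈ convexHull ℝ (Set.range f) := by
    apply Convex.sum_mem (convex_convexHull ℝ _)
    · intro i _; positivity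
    · rw [Finset.sum_const, Finset.card_univ, Fintype.card_fin, nsmul_eq_mul]
      field_simp
    · intro i _; exact subset_convexHull ℝ _ (Set.mem_range_self i)
  obtain ⟨ι, hι, z, u, hz, hai, hu, husum, huz⟩ := eq_pos_convex_span_of_mem_convexHull hmem
  -- card bound
  have hcard : Fintype.card ι ≤ d ^ 2 + 1 := by
    have h1 := hai.card_le_finrank_succ
    have h2 : Module.finrank ℝ (vectorSpan ℝ (Set.range z)) ≤
        Module.finrank ℝ (Matrix (Fin d) (Fin d) ℝ) :=
      Submodule.finrank_le _
    have h3 : Module.finrank ℝ (Matrix (Fin d) (Fin d) ℝ) = d ^ 2 := by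
      simp [Module.finrank_matrix, sq]
    omega
  -- choose preimages
  have hpre : ∀ k : ι, ∃ i : Fin n, f i = z k := fun k => hz (Set.mem_range_self k)
  choose g hg using hpre
  set w : Fin n → ℝ := fun i => ∑ k : ι, if g k = i then u k else 0 with hw
  have hw0 : ∀ i, 0 ≤ w i := by
    intro i
    apply Finset.sum_nonneg
    intro k _
    split <;> [exact (hu k).le; rfl]
  have hsupp : (Finset.univ.filter fun i => w i ≠ 0) ⊆ Finset.univ.image g := by
    intro i hi
    rw [Finset.mem_filter] at hi
    obtain ⟨k, -, hk⟩ := Finset.exists_ne_zero_of_sum_ne_zero hi.2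
    have : g k = i := by by_contra h; simp [h] at hk
    exact Finset.mem_image.2 ⟨k, Finset.mem_univ k, this⟩
  have hwsum : ∑ i, w i = 1 := by
    rw [hw]
    rw [Finset.sum_comm]
    simp [husum]
  have hwf : ∑ i, w i • f i = x := by
    rw [hw, ← huz]
    rw [show ∑ i, (∑ k : ι, if g k = i then u k else 0) • f i
        = ∑ i, ∑ k : ι, (if g k = i then u k else 0) • f i by
      exact Finset.sum_congr rfl fun i _ => Finset.sum_smul]
    rw [Finset.sum_comm]
    refine Finset.sum_congr rfl fun k _ => ?_
    rw [Finset.sum_eq_single (g k)]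
    · simp [hg k]
    · intro b _ hb; simp [hb.symm]
    · simp
  have hcov : (n : ℝ) • ∑ i, w i • vecMulVec (A i) (A i) = Aᵀ * A := by
    rw [transpose_mul_self_eq_sum_vecMulVec]
    rw [show (∑ i, w i • vecMulVec (A i) (A i)) = x from hwf]
    rw [hx, Finset.smul_sum]
    refine Finset.sum_congr rfl fun i _ => ?_
    rw [smul_smul, mul_inv_cancel₀ (ne_of_gt hnR), one_smul]
  refine ⟨w, hw0, le_trans (Finset.card_le_card hsupp)
      (le_trans (Finset.card_image_le.trans (by simp)) hcard), hwsum, hcov, ?_⟩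
  rw [← hcov]
  ext j k
  simp only [Matrix.mul_apply, Matrix.transpose_apply, Matrix.of_apply, Matrix.smul_apply,
    Matrix.sum_apply, vecMulVec_apply, smul_eq_mul, Finset.mul_sum]
  refine Finset.sum_congr rfl fun i _ => ?_
  have h : Real.sqrt ((n:ℝ) * w i) * Real.sqrt ((n:ℝ) * w i) = (n:ℝ) * w i :=
    Real.mul_self_sqrt (mul_nonneg hnR.le (hw0 i))
  calc Real.sqrt ((n:ℝ) * w i) * A i j * (Real.sqrt ((n:ℝ) * w i) * A i k)
      = (Real.sqrt ((n:ℝ) * w i) * Real.sqrt ((n:ℝ) * w i)) * (A i j * A i k) := by ring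
    _ = (n:ℝ) * (w i * (A i j * A i k)) := by rw [h]; ring
end

section
/- Let d ≥ 1 and k₂ ∈ {1, …, d} be integers, let d' = ⌈d/k₂⌉, and let I_1, …, I_{k₂} be a partition of the coordinate indices {1, …, d} into k₂ disjoint subsets, each of size at most d'. Let (P, u) be a weighted set of n points in ℝ^d with Σ_{p∈P} u(p) = 1. Then there exist a finite set C ⊆ ℝ^d with |C| ≤ k₂·(d' + 1) and a weight function w : C → [0, ∞) such that: (i) every c ∈ C is obtained from some p ∈ P by setting to zero all coordinates whose indices lie outside some single block I_j (i.e., c agrees with p on I_j and is zero elsewhere); (ii) Σ_{c∈C} w(c)·c = Σ_{p∈P} u(p)·p; and (iii) Σ_{c∈C} w(c) = k₂. -/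
open Module

lemma aux_finrank_vectorSpan {d : ℕ} (s : Finset (Fin d)) (t : Finset (Fin d → ℝ))
    (h : ∀ v ∈ t, ∀ i ∉ s, v i = 0) :
    Module.finrank ℝ (vectorSpan ℝ (t : Set (Fin d → ℝ))) ≤ s.card := by
  classical
  set W := Submodule.span ℝ ((s.image fun i => (Pi.single i 1 : Fin d → ℝ)) : Set (Fin d → ℝ)) with hW
  have hmem : ∀ v ∈ t, v ∈ W := by
    intro v hv
    have hv' : v = ∑ i ∈ s, v i • (Pi.single i 1 : Fin d → ℝ) := by
      funext j
      simp only [Finset.sum_apply, Pi.smul_apply, Pi.single_apply, smul_eq_mul, mul_ite,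
        mul_one, mul_zero]
      rw [Finset.sum_ite_eq s j v]
      by_cases hj : j ∈ s
      · simp [hj]
      · simp [hj, h v hv j hj]
    rw [hv']
    exact Submodule.sum_mem _ fun i hi => Submodule.smul_mem _ _
      (Submodule.subset_span (Finset.mem_coe.2 (Finset.mem_image_of_mem _ hi)))
  have hle : vectorSpan ℝ (t : Set (Fin d → ℝ)) ≤ W := by
    rw [vectorSpan_def, Submodule.span_le]
    rintro x hx
    rw [Set.mem_vsub] at hx
    obtain ⟨a, ha, b, hb, rfl⟩ := hx
    rw [vsub_eq_sub]
    exact Submodule.sub_mem _ (hmem a ha) (hmem b hb)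
  calc Module.finrank ℝ (vectorSpan ℝ (t : Set (Fin d → ℝ)))
      ≤ Module.finrank ℝ W := Submodule.finrank_mono hle
    _ ≤ (s.image fun i => (Pi.single i 1 : Fin d → ℝ)).card := finrank_span_finset_le_card _
    _ ≤ s.card := Finset.card_image_le

/-- **Sparse Caratheodory set existence.** Given a partition of the `d`
coordinates into `k₂` blocks of size at most `d' = ⌈d / k₂⌉` and a weighted
set `(P, u)` of total weight `1`, there is a weighted set `(C, w)` of at most
`k₂ · (d' + 1)` points, each obtained from a point of `P` by zeroing all
coordinates outside a single block, with the same weighted sum as `(P, u)`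
and total weight `k₂`. -/
theorem sparse_caratheodory_exists (d k₂ d' : ℕ) (hd : 1 ≤ d)
    (hk₂ : 1 ≤ k₂) (hk₂d : k₂ ≤ d) (hd' : d' = (d + k₂ - 1) / k₂)
    (I : Fin k₂ → Finset (Fin d))
    (hIdisj : ∀ i j, i ≠ j → Disjoint (I i) (I j))
    (hIunion : Finset.univ.biUnion I = Finset.univ)
    (hIcard : ∀ i, (I i).card ≤ d')
    (P : Finset (Fin d → ℝ)) (u : (Fin d → ℝ) → ℝ)
    (hu : ∀ p ∈ P, 0 ≤ u p) (husum : ∑ p ∈ P, u p = 1) :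
    ∃ (C : Finset (Fin d → ℝ)) (w : (Fin d → ℝ) → ℝ),
      C.card ≤ k₂ * (d' + 1) ∧
      (∀ c ∈ C, 0 ≤ w c) ∧
      (∀ c ∈ C, ∃ p ∈ P, ∃ j, (∀ t ∈ I j, c t = p t) ∧ ∀ t ∉ I j, c t = 0) ∧
      ∑ c ∈ C, w c • c = ∑ p ∈ P, u p • p ∧
      ∑ c ∈ C, w c = k₂ := by
  classical
  set f : Fin k₂ → (Fin d → ℝ) → (Fin d → ℝ) :=
    fun j p t => if t ∈ I j then p t else 0 with hf
  -- per-block Caratheodory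
  have key : ∀ j : Fin k₂, ∃ T : Finset (Fin d → ℝ),
      (T : Set (Fin d → ℝ)) ⊆ f j '' ↑P ∧ T.card ≤ d' + 1 ∧
      ∃ W : (Fin d → ℝ) → ℝ, (∀ c ∈ T, 0 ≤ W c) ∧ (∑ c ∈ T, W c = 1) ∧
        ∑ c ∈ T, W c • c = ∑ p ∈ P, u p • f j p := by
    intro j
    have hx : ∑ p ∈ P, u p • f j p ∈ convexHull ℝ (f j '' ↑P) := by
      have := Finset.centerMass_mem_convexHull P hu (by rw [husum]; norm_num)
        (fun p hp => Set.mem_image_of_mem (f j) (Finset.mem_coe.2 hp))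
      rwa [Finset.centerMass_eq_of_sum_1 _ _ husum] at this
    rw [convexHull_eq_union] at hx
    simp only [Set.mem_iUnion] at hx
    obtain ⟨T, hTsub, hTai, hxT⟩ := hx
    refine ⟨T, hTsub, ?_, ?_⟩
    · -- cardinality bound via affine independence
      have h0 : ∀ v ∈ T, ∀ i ∉ I j, v i = 0 := by
        intro v hv i hi
        obtain ⟨p, _, rfl⟩ := hTsub (Finset.mem_coe.2 hv)
        simp [hf, hi]
      have hcard := hTai.card_le_finrank_succ
      have heq : vectorSpan ℝ (Set.range (Subtype.val : {x // x ∈ T} → (Fin d → ℝ)))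
          = vectorSpan ℝ (T : Set (Fin d → ℝ)) := by
        rw [Subtype.range_coe]
      rw [heq, Fintype.card_coe] at hcard
      exact hcard.trans (Nat.add_le_add_right
        ((aux_finrank_vectorSpan (I j) T h0).trans (hIcard j)) 1)
    · rw [Finset.convexHull_eq] at hxT
      obtain ⟨W, hW0, hW1, hWc⟩ := hxT
      refine ⟨W, hW0, hW1, ?_⟩
      rw [Finset.centerMass_eq_of_sum_1 _ _ hW1] at hWc
      simpa using hWc
  choose T hTsub hTcard W hW0 hW1 hWsum using key
  set wf : Fin k₂ → (Fin d → ℝ) → ℝ :=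
    fun j c => if c ∈ T j then W j c else 0 with hwf
  set C : Finset (Fin d → ℝ) := Finset.univ.biUnion T with hC
  refine ⟨C, fun c => ∑ j, wf j c, ?_, ?_, ?_, ?_, ?_⟩
  · calc C.card ≤ ∑ j, (T j).card := Finset.card_biUnion_le
      _ ≤ ∑ _j : Fin k₂, (d' + 1) := Finset.sum_le_sum fun j _ => hTcard j
      _ = k₂ * (d' + 1) := by simp [Finset.sum_const, mul_comm]
  · intro c _
    refine Finset.sum_nonneg fun j _ => ?_
    by_cases hc : c ∈ T j
    · simpa [hwf, hc] using hW0 j c hc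
    · simp [hwf, hc]
  · intro c hc
    rw [hC, Finset.mem_biUnion] at hc
    obtain ⟨j, _, hcT⟩ := hc
    obtain ⟨p, hp, rfl⟩ := hTsub j (Finset.mem_coe.2 hcT)
    exact ⟨p, Finset.mem_coe.1 hp, j, fun t ht => by simp [hf, ht],
      fun t ht => by simp [hf, ht]⟩
  · -- weighted sums agree
    have hblock : ∀ j, ∑ c ∈ C, wf j c • c = ∑ p ∈ P, u p • f j p := by
      intro j
      rw [← hWsum j]
      rw [← Finset.sum_subset (Finset.subset_biUnion_of_mem T (Finset.mem_univ j) : T j ⊆ C)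
        (fun c _ hc => by simp [hwf, hc])]
      exact Finset.sum_congr rfl fun c hc => by simp [hwf, hc]
    calc ∑ c ∈ C, (∑ j, wf j c) • c = ∑ c ∈ C, ∑ j, wf j c • c := by
          simp [Finset.sum_smul]
      _ = ∑ j, ∑ c ∈ C, wf j c • c := Finset.sum_comm
      _ = ∑ j, ∑ p ∈ P, u p • f j p := by simp [hblock]
      _ = ∑ p ∈ P, u p • ∑ j, f j p := by rw [Finset.sum_comm]; simp [Finset.smul_sum]
      _ = ∑ p ∈ P, u p • p := by
          refine Finset.sum_congr rfl fun p _ => ?_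
          congr 1
          funext t
          have ht : t ∈ Finset.univ.biUnion I := by rw [hIunion]; exact Finset.mem_univ t
          obtain ⟨j₀, _, hj₀⟩ := Finset.mem_biUnion.1 ht
          rw [Finset.sum_apply]
          rw [Finset.sum_eq_single j₀]
          · simp [hf, hj₀]
          · intro b _ hb
            have hnb : t ∉ I b := fun htb => (Finset.disjoint_left.1 (hIdisj b j₀ hb)) htb hj₀
            simp [hf, hnb]
          · intro h
            exact absurd (Finset.mem_univ j₀) h
  · -- total weight
    have hblock : ∀ j, ∑ c ∈ C, wf j c = 1 := by
      intro j
      rw [← hW1 j]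
      rw [← Finset.sum_subset (Finset.subset_biUnion_of_mem T (Finset.mem_univ j) : T j ⊆ C)
        (fun c _ hc => by simp [hwf, hc])]
      exact Finset.sum_congr rfl fun c hc => by simp [hwf, hc]
    show ∑ c ∈ C, ∑ j, wf j c = (k₂ : ℝ)
    calc ∑ c ∈ C, ∑ j, wf j c = ∑ j, ∑ c ∈ C, wf j c := Finset.sum_comm
      _ = ∑ _j : Fin k₂, (1:ℝ) := by simp [hblock]
      _ = k₂ := by simp
end

section
/- Let A ∈ ℝ^{n×d} have rows a_1ᵀ, …, a_nᵀ, let A' = [A | 1_n] ∈ ℝ^{n×(d+1)} where 1_n is the all-ones vector, and let j ∈ {1, …, d − 1}. Let S' ∈ ℝ^{l×(d+1)} be any matrix satisfying S'ᵀS' = A'ᵀA', and write its i-th row as s'_i = (s_iᵀ | z_i) with s_i ∈ ℝ^d and z_i ∈ ℝ; assume z_i ≠ 0 for every i ∈ [l]. Define c_i = s_i / z_i ∈ ℝ^d and w_i = z_i² for every i ∈ [l]. Then for every matrix Y ∈ ℝ^{d×(d−j)} with YᵀY = I_{d−j} and every vector ℓ ∈ ℝ^d: Σ_{i=1}^n ‖(a_iᵀ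 − ℓᵀ)Y‖₂² = Σ_{i=1}^l w_i·‖(c_iᵀ − ℓᵀ)Y‖₂². -/
open Matrix

lemma sq_sum_gram {m : ℕ} {ι : Type*} [Fintype ι] (M : Matrix (Fin m) ι ℝ) (v : ι → ℝ) :
    ∑ i, (∑ p, M i p * v p) ^ 2 = ∑ p, ∑ q, (Mᵀ * M) p q * (v p * v q) := by
  calc ∑ i, (∑ p, M i p * v p) ^ 2
      = ∑ i, ∑ p, ∑ q, (M i p * v p) * (M i q * v q) := by
        simp [sq, Finset.sum_mul_sum]
    _ = ∑ p, ∑ i, ∑ q, (M i p * v p) * (M i q * v q) := Finset.sum_comm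
    _ = ∑ p, ∑ q, ∑ i, (M i p * v p) * (M i q * v q) := by
        refine Finset.sum_congr rfl fun p _ => Finset.sum_comm
    _ = ∑ p, ∑ q, (Mᵀ * M) p q * (v p * v q) := by
        refine Finset.sum_congr rfl fun p _ => Finset.sum_congr rfl fun q _ => ?_
        simp only [Matrix.mul_apply, Matrix.transpose_apply, Finset.sum_mul]
        exact Finset.sum_congr rfl fun i _ => by ring

/-- **PCA coreset (Observation 7.2).** If `S' ∈ ℝ^{l×(d+1)}` has the same
covariance as the augmented matrix `A' = [A | 1_n]` and each last entry
`z_i` of a row of `S'` is nonzero, then with `c_i = s_i / z_i` and weights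
`w_i = z_i²`, for every orthonormal `Y ∈ ℝ^{d×(d−j)}` and translation
`ℓ ∈ ℝ^d` the weighted sum of squared distances is preserved exactly:
`∑_{i=1}^n ‖(a_iᵀ − ℓᵀ)Y‖₂² = ∑_{i=1}^l w_i ‖(c_iᵀ − ℓᵀ)Y‖₂²`. -/
theorem pca_coreset (n d l j : ℕ) (hj : 1 ≤ j) (hjd : j ≤ d - 1)
    (A : Matrix (Fin n) (Fin d) ℝ)
    (A' : Matrix (Fin n) (Fin d ⊕ Unit) ℝ)
    (hA' : A' = Matrix.of fun i s => Sum.elim (fun t => A i t) (fun _ => (1 : ℝ)) s)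
    (S' : Matrix (Fin l) (Fin d ⊕ Unit) ℝ)
    (hS' : S'ᵀ * S' = A'ᵀ * A')
    (s : Fin l → Fin d → ℝ) (hs : ∀ i t, s i t = S' i (Sum.inl t))
    (z : Fin l → ℝ) (hz : ∀ i, z i = S' i (Sum.inr ()))
    (hznz : ∀ i, z i ≠ 0)
    (c : Fin l → Fin d → ℝ) (hc : ∀ i t, c i t = s i t / z i)
    (w : Fin l → ℝ) (hw : ∀ i, w i = (z i) ^ 2) :
    ∀ (Y : Matrix (Fin d) (Fin (d - j)) ℝ), Yᵀ * Y = 1 →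
      ∀ ℓ : Fin d → ℝ,
        ∑ i, ∑ k, (∑ t, (A i t - ℓ t) * Y t k) ^ 2 =
        ∑ i, w i * ∑ k, (∑ t, (c i t - ℓ t) * Y t k) ^ 2 := by
  intro Y _ ℓ
  set v : Fin (d - j) → (Fin d ⊕ Unit) → ℝ :=
    fun k => Sum.elim (fun t => Y t k) (fun _ => -∑ t, ℓ t * Y t k) with hv
  have hL : ∀ (i : Fin n) (k), ∑ t, (A i t - ℓ t) * Y t k = ∑ p, A' i p * v k p := by
    intro i k
    rw [Fintype.sum_sum_type]
    simp only [hA', hv, Matrix.of_apply, Sum.elim_inl, Sum.elim_inr, one_mul,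
      Finset.univ_unique, Finset.sum_const, Finset.card_singleton, one_smul, sub_mul,
      Finset.sum_sub_distrib]
    ring
  have hR : ∀ (i : Fin l) (k), z i * ∑ t, (c i t - ℓ t) * Y t k = ∑ p, S' i p * v k p := by
    intro i k
    rw [Fintype.sum_sum_type, Finset.mul_sum]
    simp only [hv, Sum.elim_inl, Sum.elim_inr, Finset.univ_unique, Finset.sum_const,
      Finset.card_singleton, one_smul, Finset.sum_singleton]
    have h1 : ∀ t : Fin d, z i * ((c i t - ℓ t) * Y t k)
        = S' i (Sum.inl t) * Y t k - z i * (ℓ t * Y t k) := by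
      intro t
      rw [hc, ← hs]
      field_simp [hznz i]
    rw [Finset.sum_congr rfl fun t _ => h1 t, Finset.sum_sub_distrib,
      show S' i (Sum.inr default) = z i from (hz i).symm, sub_eq_add_neg, mul_neg,
      Finset.mul_sum]
  calc ∑ i, ∑ k, (∑ t, (A i t - ℓ t) * Y t k) ^ 2
      = ∑ k, ∑ i, (∑ p, A' i p * v k p) ^ 2 := by
        rw [Finset.sum_comm]
        exact Finset.sum_congr rfl fun k _ => Finset.sum_congr rfl fun i _ => by rw [hL]
    _ = ∑ k, ∑ p, ∑ q, (A'ᵀ * A') p q * (v k p * v k q) :=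
        Finset.sum_congr rfl fun k _ => sq_sum_gram A' (v k)
    _ = ∑ k, ∑ p, ∑ q, (S'ᵀ * S') p q * (v k p * v k q) := by rw [hS']
    _ = ∑ k, ∑ i, (∑ p, S' i p * v k p) ^ 2 :=
        (Finset.sum_congr rfl fun k _ => (sq_sum_gram S' (v k)).symm)
    _ = ∑ i, w i * ∑ k, (∑ t, (c i t - ℓ t) * Y t k) ^ 2 := by
        rw [Finset.sum_comm]
        refine Finset.sum_congr rfl fun i _ => ?_
        rw [Finset.mul_sum]
        refine Finset.sum_congr rfl fun k _ => ?_
        rw [← hR, mul_pow, hw]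
end
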